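/- arXiv:1303.2467 — 6 statements merged into one kernel-verified Lean document; each statement's English description precedes it below -/
import Mathlib

section
/- Λ-simulations are stable under relational composition: if S is a Λ-simulation from C to D and S' is a Λ-simulation from D to E, then the relational composite S' ∘ S is a Λ-simulation from C to E. -/
open CategoryTheory

universe u

/-- A monotone predicate lifting for a `Set`-endofunctor `T`:
a natural transformation `Q → Q ∘ T^op` whose components are monotone. -/
structure PredLifting (T : Type u ⥤ Type u) where
  app : ∀ X : Type u, Set X → Set (T.obj X)
  natural : ∀ {X Y : Type u} (f : X → Y) (A : Set Y),
    app X (f ⁻¹' A) = T.map (TypeCat.ofHom f) ⁻¹' app Y A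
  mono : ∀ (X : Type u) ⦃A B : Set X⦄, A ⊆ B → app X A ⊆ app X B

/-- Relational image `S[A]`. -/
def RelImage {X Y : Type u} (S : X → Y → Prop) (A : Set X) : Set Y :=
  {y | ∃ x ∈ A, S x y}

/-- `S` is a `Λ`-simulation from the `T`-coalgebra `(X,ξ)` to `(Y,ζ)`. -/
def IsSim {T : Type u ⥤ Type u} (Λ : Set (PredLifting T))
    {X Y : Type u} (ξ : X → T.obj X) (ζ : Y → T.obj Y)
    (S : X → Y → Prop) : Prop :=
  ∀ x y, S x y → ∀ L ∈ Λ, ∀ A : Set X,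
    ξ x ∈ L.app X A → ζ y ∈ L.app Y (RelImage S A)

theorem relImage_comp {X Y Z : Type u} (S : X → Y → Prop) (S' : Y → Z → Prop) (A : Set X) :
    RelImage (fun x z => ∃ y, S x y ∧ S' y z) A = RelImage S' (RelImage S A) := by
  ext z
  constructor
  · rintro ⟨x, hx, y, hxy, hyz⟩
    exact ⟨y, ⟨x, hx, hxy⟩, hyz⟩
  · rintro ⟨y, ⟨x, hx, hxy⟩, hyz⟩
    exact ⟨x, hx, y, hxy, hyz⟩

theorem lambda_sim_comp {T : Type u ⥤ Type u} (Λ : Set (PredLifting T))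
    {X Y Z : Type u} (ξ : X → T.obj X) (ζ : Y → T.obj Y) (χ : Z → T.obj Z)
    (S : X → Y → Prop) (S' : Y → Z → Prop)
    (hS : IsSim Λ ξ ζ S) (hS' : IsSim Λ ζ χ S') :
    IsSim Λ ξ χ (fun x z => ∃ y, S x y ∧ S' y z) := by
  rintro x z ⟨y, hxy, hyz⟩ L hL A hA
  rw [relImage_comp]
  exact hS' y z hyz L hL _ (hS x y hxy L hL A hA)
end

section
/- A function f : X → Y between the carriers of T-coalgebras (X,ξ) and (Y,ζ) is a Λ-homomorphism (i.e., its graph is a Λ-simulation) if and only if for all x ∈ X, Tf(ξ(x)) ≤_Λ ζ(f(x)), where s ≤_Λ t means that for all ♥ ∈ Λ and A ⊆ Y, s ∈ ⟦♥⟧_Y A implies t ∈ ⟦♥⟧_Y A. -/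
open CategoryTheory

universe u

/-!
The relational image along the graph of `f` is the direct image `f '' A`, so the claim says
that `ξ x ∈ ⟦♥⟧ A → ζ (f x) ∈ ⟦♥⟧ (f '' A)` for all `A ⊆ X` is equivalent to
`Tf (ξ x) ∈ ⟦♥⟧ B → ζ (f x) ∈ ⟦♥⟧ B` for all `B ⊆ Y`. By naturality `Tf s ∈ ⟦♥⟧ B` iff
`s ∈ ⟦♥⟧ (f ⁻¹' B)`, and the two conditions match up through `A ⊆ f ⁻¹' (f '' A)` and
`f '' (f ⁻¹' B) ⊆ B`, using monotonicity of `⟦♥⟧`.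
-/

theorem relImage_graph {X Y : Type u} (f : X → Y) (A : Set X) :
    RelImage (fun x y => f x = y) A = f '' A :=
  rfl

namespace PredLifting

variable {T : Type u ⥤ Type u} (L : PredLifting T) {X Y : Type u}

theorem mem_app_preimage_iff (f : X → Y) (B : Set Y) (s : T.obj X) :
    s ∈ L.app X (f ⁻¹' B) ↔ T.map (TypeCat.ofHom f) s ∈ L.app Y B := by
  rw [L.natural f B, Set.mem_preimage]

theorem forall_mem_app_image_iff (f : X → Y) (s : T.obj X) (t : T.obj Y) :
    (∀ A : Set X, s ∈ L.app X A → t ∈ L.app Y (f '' A)) ↔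
      ∀ B : Set Y, T.map (TypeCat.ofHom f) s ∈ L.app Y B → t ∈ L.app Y B := by
  constructor
  · intro h B hB
    exact L.mono Y (Set.image_preimage_subset f B)
      (h _ ((L.mem_app_preimage_iff f B s).2 hB))
  · intro h A hA
    exact h _ ((L.mem_app_preimage_iff f _ s).1 (L.mono X (Set.subset_preimage_image f A) hA))

end PredLifting

theorem isSim_graph_iff {T : Type u ⥤ Type u} (Λ : Set (PredLifting T))
    {X Y : Type u} (ξ : X → T.obj X) (ζ : Y → T.obj Y) (f : X → Y) :
    IsSim Λ ξ ζ (fun x y => f x = y) ↔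
      ∀ x : X, ∀ L ∈ Λ, ∀ A : Set X, ξ x ∈ L.app X A → ζ (f x) ∈ L.app Y (f '' A) := by
  simp only [IsSim, relImage_graph, forall_eq']

theorem lambda_hom_iff_le {T : Type u ⥤ Type u} (Λ : Set (PredLifting T))
    {X Y : Type u} (ξ : X → T.obj X) (ζ : Y → T.obj Y) (f : X → Y) :
    IsSim Λ ξ ζ (fun x y => f x = y) ↔
      ∀ x : X, ∀ L ∈ Λ, ∀ A : Set Y,
        T.map (TypeCat.ofHom f) (ξ x) ∈ L.app Y A → ζ (f x) ∈ L.app Y A := by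
  rw [isSim_graph_iff]
  exact forall_congr' fun x => forall₂_congr fun L _ => L.forall_mem_app_image_iff f (ξ x) (ζ (f x))
end

section
/- If S is a Λ-simulation between T-coalgebras C and D and x S y, then for every positive Λ-formula φ, x ⊨ φ implies y ⊨ φ. -/
open CategoryTheory

universe u

/-- Positive `Λ`-formulas. -/
inductive PosForm {T : Type u ⥤ Type u} (Λ : Set (PredLifting T)) : Type (u+1) where
  | top : PosForm Λ
  | bot : PosForm Λ
  | and : PosForm Λ → PosForm Λ → PosForm Λ
  | or : PosForm Λ → PosForm Λ → PosForm Λ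
  | mod : Λ → PosForm Λ → PosForm Λ

/-- Satisfaction of positive formulas in a `T`-coalgebra. -/
def PosSat {T : Type u ⥤ Type u} {Λ : Set (PredLifting T)} {X : Type u}
    (ξ : X → T.obj X) : PosForm Λ → X → Prop
  | .top => fun _ => True
  | .bot => fun _ => False
  | .and φ ψ => fun x => PosSat ξ φ x ∧ PosSat ξ ψ x
  | .or φ ψ => fun x => PosSat ξ φ x ∨ PosSat ξ ψ x
  | .mod L φ => fun x => ξ x ∈ (L : PredLifting T).app X {z | PosSat ξ φ z}

/-- Rank (modal nesting depth) of a positive formula. -/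
def PosRank {T : Type u ⥤ Type u} {Λ : Set (PredLifting T)} : PosForm Λ → ℕ
  | .top => 0
  | .bot => 0
  | .and φ ψ => max (PosRank φ) (PosRank ψ)
  | .or φ ψ => max (PosRank φ) (PosRank ψ)
  | .mod _ φ => PosRank φ + 1

theorem relImage_subset_iff {X Y : Type u} {S : X → Y → Prop} {A : Set X} {B : Set Y} :
    RelImage S A ⊆ B ↔ ∀ ⦃a b⦄, a ∈ A → S a b → b ∈ B :=
  ⟨fun h _ _ ha hab => h ⟨_, ha, hab⟩, fun h _ ⟨_, ha, hab⟩ => h ha hab⟩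

theorem IsSim.app_of_app {T : Type u ⥤ Type u} {Λ : Set (PredLifting T)} {X Y : Type u}
    {ξ : X → T.obj X} {ζ : Y → T.obj Y} {S : X → Y → Prop} (hS : IsSim Λ ξ ζ S)
    {x : X} {y : Y} (hxy : S x y) {L : PredLifting T} (hL : L ∈ Λ) {A : Set X} {B : Set Y}
    (hAB : ∀ ⦃a b⦄, a ∈ A → S a b → b ∈ B) (hx : ξ x ∈ L.app X A) : ζ y ∈ L.app Y B :=
  L.mono Y (relImage_subset_iff.2 hAB) (hS x y hxy L hL A hx)

theorem lambda_sim_preserves_positive {T : Type u ⥤ Type u}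
    {Λ : Set (PredLifting T)} {X Y : Type u}
    (ξ : X → T.obj X) (ζ : Y → T.obj Y) (S : X → Y → Prop)
    (hS : IsSim Λ ξ ζ S) {x : X} {y : Y} (hxy : S x y)
    (φ : PosForm Λ) (hx : PosSat ξ φ x) : PosSat ζ φ y := by
  induction φ generalizing x y with
  | top => trivial
  | bot => exact hx
  | and φ ψ ihφ ihψ => exact ⟨ihφ hxy hx.1, ihψ hxy hx.2⟩
  | or φ ψ ihφ ihψ => exact hx.imp (ihφ hxy) (ihψ hxy)
  | mod L φ ih => exact hS.app_of_app hxy L.2 (fun _ _ ha hab => ih hab ha) hx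
end

section
/- For any T-coalgebras C = (X,ξ) and D = (Y,ζ) and any n, the n-step equivalence relation ≈_n = {(x,y) | ξ_n(x) = ζ_n(y)} ⊆ X × Y is a Λ-n-bisimulation. -/
open CategoryTheory

universe u

/-- `Λ`-`n`-simulations, defined inductively on `n`. -/
def IsNSim {T : Type u ⥤ Type u} (Λ : Set (PredLifting T))
    {X Y : Type u} (ξ : X → T.obj X) (ζ : Y → T.obj Y) :
    ℕ → (X → Y → Prop) → Prop
  | 0, _ => True
  | n + 1, S => ∃ S' : X → Y → Prop, IsNSim Λ ξ ζ n S' ∧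
      (∀ x y, S x y → S' x y) ∧
      ∀ x y, S x y → ∀ L ∈ Λ, ∀ A : Set X,
        ξ x ∈ L.app X A → ζ y ∈ L.app Y (RelImage S' A)

/-- The terminal sequence of `T`. -/
def TSeq (T : Type u ⥤ Type u) : ℕ → Type u
  | 0 => PUnit
  | n + 1 => T.obj (TSeq T n)

/-- The canonical cone from a coalgebra into the terminal sequence. -/
def seqMap (T : Type u ⥤ Type u) {X : Type u} (ξ : X → T.obj X) :
    ∀ n : ℕ, X → TSeq T n
  | 0 => fun _ => PUnit.unit
  | n + 1 => fun x => T.map (TypeCat.ofHom (seqMap T ξ n)) (ξ x)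

/-!
States that agree after `n + 1` steps agree after `n` steps, because `seqMap` commutes with the
connecting maps of the terminal sequence. For the simulation clause, if `T f (ξ x) = T g (ζ y)` for
`f = ξ_n`, `g = ζ_n`, then by monotonicity and naturality `ξ x ∈ ⟦♥⟧ A ⊆ ⟦♥⟧ (f⁻¹ f[A])` transports to
`ζ y ∈ ⟦♥⟧ (g⁻¹ f[A])`, and `g⁻¹ f[A]` is exactly the image of `A` under `≈_n`.
-/

def TSeq.proj (T : Type u ⥤ Type u) : ∀ n : ℕ, TSeq T (n + 1) → TSeq T n
  | 0 => fun _ => PUnit.unit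
  | n + 1 => T.map (TypeCat.ofHom (TSeq.proj T n))

theorem TSeq.proj_seqMap (T : Type u ⥤ Type u) {X : Type u} (ξ : X → T.obj X) :
    ∀ n x, TSeq.proj T n (seqMap T ξ (n + 1) x) = seqMap T ξ n x
  | 0, _ => rfl
  | n + 1, x => by
    have hcomp : (fun z => TSeq.proj T n (seqMap T ξ (n + 1) z)) = seqMap T ξ n :=
      funext (TSeq.proj_seqMap T ξ n)
    change T.map _ (T.map _ (ξ x)) = T.map (TypeCat.ofHom (seqMap T ξ n)) (ξ x)
    rw [← Functor.map_comp_apply, ← hcomp]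
    rfl

theorem seqMap_eq_of_seqMap_succ_eq {T : Type u ⥤ Type u} {X Y : Type u}
    {ξ : X → T.obj X} {ζ : Y → T.obj Y} {n : ℕ} {x : X} {y : Y}
    (h : seqMap T ξ (n + 1) x = seqMap T ζ (n + 1) y) : seqMap T ξ n x = seqMap T ζ n y := by
  rw [← TSeq.proj_seqMap T ξ, ← TSeq.proj_seqMap T ζ, h]

theorem PredLifting.mem_app_relImage_of_map_eq {T : Type u ⥤ Type u} (L : PredLifting T)
    {X Y Z : Type u} (f : X → Z) (g : Y → Z) {a : T.obj X} {b : T.obj Y}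
    (hab : T.map (TypeCat.ofHom f) a = T.map (TypeCat.ofHom g) b) {A : Set X}
    (ha : a ∈ L.app X A) : b ∈ L.app Y (RelImage (fun x y => f x = g y) A) := by
  have hfa : a ∈ L.app X (f ⁻¹' (f '' A)) := L.mono X (Set.subset_preimage_image f A) ha
  rw [L.natural, Set.mem_preimage, hab] at hfa
  rwa [← Set.mem_preimage, ← L.natural] at hfa

theorem isNSim_seqMap_eq {T : Type u ⥤ Type u} (Λ : Set (PredLifting T)) {X Y : Type u}
    (ξ : X → T.obj X) (ζ : Y → T.obj Y) (n : ℕ) :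
    IsNSim Λ ξ ζ n (fun x y => seqMap T ξ n x = seqMap T ζ n y) := by
  induction n with
  | zero => trivial
  | succ n ih =>
    exact ⟨_, ih, fun _ _ => seqMap_eq_of_seqMap_succ_eq, fun _ _ h L _ _ =>
      L.mem_app_relImage_of_map_eq (seqMap T ξ n) (seqMap T ζ n) h⟩

theorem n_step_equiv_is_n_bisim {T : Type u ⥤ Type u}
    (Λ : Set (PredLifting T)) {X Y : Type u}
    (ξ : X → T.obj X) (ζ : Y → T.obj Y) (n : ℕ) :
    IsNSim Λ ξ ζ n (fun x y => seqMap T ξ n x = seqMap T ζ n y) ∧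
      IsNSim Λ ζ ξ n (fun y x => seqMap T ξ n x = seqMap T ζ n y) := by
  have hsymm : (fun y x => seqMap T ξ n x = seqMap T ζ n y) =
      fun y x => seqMap T ζ n y = seqMap T ξ n x := by
    ext
    exact eq_comm
  exact ⟨isNSim_seqMap_eq Λ ξ ζ n, hsymm ▸ isNSim_seqMap_eq Λ ζ ξ n⟩
end

section
/- The behavioural equivalence relation ≈ between two T-coalgebras C and D is a Λ-bisimulation, where x ≈ y iff there exist a T-coalgebra E and coalgebra morphisms f : C → E, g : D → E with f(x) = g(y). -/
open CategoryTheory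

universe u

/-- `f` is a coalgebra morphism. -/
def IsCoalgMor {T : Type u ⥤ Type u} {X Y : Type u}
    (ξ : X → T.obj X) (ζ : Y → T.obj Y) (f : X → Y) : Prop :=
  ∀ x, ζ (f x) = T.map (TypeCat.ofHom f) (ξ x)

/-- Behavioural equivalence between states of two coalgebras. -/
def BhvEquiv {T : Type u ⥤ Type u} {X Y : Type u}
    (ξ : X → T.obj X) (ζ : Y → T.obj Y) (x : X) (y : Y) : Prop :=
  ∃ (Z : Type u) (χ : Z → T.obj Z) (f : X → Z) (g : Y → Z),
    IsCoalgMor ξ χ f ∧ IsCoalgMor ζ χ g ∧ f x = g y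

/-!
If `f : C → E` and `g : D → E` are coalgebra morphisms with `f x = g y`, then
naturality of a predicate lifting transports `ξ x ∈ ♥_X A` along `f` to `χ (f x) ∈ ♥_E (f[A])`,
i.e. to `χ (g y) ∈ ♥_E (f[A])`, and back along `g` to `ζ y ∈ ♥_Y (g⁻¹ f[A])`. Every state of
`g⁻¹ f[A]` is behaviourally equivalent to a state in `A` via the same pair `f, g`, so monotonicity
gives the simulation condition. Since `≈` is symmetric, the converse direction is the same
statement with the coalgebras swapped.
-/

namespace PredLifting

variable {T : Type u ⥤ Type u} (L : PredLifting T) {X Z : Type u}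
  {ξ : X → T.obj X} {χ : Z → T.obj Z} {f : X → Z}

theorem mem_app_preimage_iff_s14 (hf : IsCoalgMor ξ χ f) (x : X) (B : Set Z) :
    ξ x ∈ L.app X (f ⁻¹' B) ↔ χ (f x) ∈ L.app Z B := by
  rw [L.natural, Set.mem_preimage, hf]

theorem mem_app_image_of_isCoalgMor (hf : IsCoalgMor ξ χ f) {x : X} {A : Set X}
    (h : ξ x ∈ L.app X A) : χ (f x) ∈ L.app Z (f '' A) :=
  (L.mem_app_preimage_iff_s14 hf x _).1 (L.mono X (Set.subset_preimage_image f A) h)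

end PredLifting

section BhvEquiv

variable {T : Type u ⥤ Type u} {X Y : Type u} {ξ : X → T.obj X} {ζ : Y → T.obj Y}

theorem bhvEquiv_comm {x : X} {y : Y} : BhvEquiv ζ ξ y x ↔ BhvEquiv ξ ζ x y := by
  constructor <;>
  · rintro ⟨Z, χ, f, g, hf, hg, hfg⟩
    exact ⟨Z, χ, g, f, hg, hf, hfg.symm⟩

theorem preimage_image_subset_relImage_bhvEquiv {Z : Type u} {χ : Z → T.obj Z} {f : X → Z}
    {g : Y → Z} (hf : IsCoalgMor ξ χ f) (hg : IsCoalgMor ζ χ g) (A : Set X) :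
    g ⁻¹' (f '' A) ⊆ RelImage (BhvEquiv ξ ζ) A := by
  rintro y ⟨x, hx, hfg⟩
  exact ⟨x, hx, Z, χ, f, g, hf, hg, hfg⟩

variable (ξ ζ)

theorem isSim_bhvEquiv (Λ : Set (PredLifting T)) : IsSim Λ ξ ζ (BhvEquiv ξ ζ) := by
  rintro x y ⟨Z, χ, f, g, hf, hg, hfg⟩ L - A hA
  have hχ : χ (g y) ∈ L.app Z (f '' A) := hfg ▸ L.mem_app_image_of_isCoalgMor hf hA
  exact L.mono Y (preimage_image_subset_relImage_bhvEquiv hf hg A)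
    ((L.mem_app_preimage_iff_s14 hg y _).2 hχ)

end BhvEquiv

theorem bhv_equiv_is_bisimulation {T : Type u ⥤ Type u}
    (Λ : Set (PredLifting T)) {X Y : Type u}
    (ξ : X → T.obj X) (ζ : Y → T.obj Y) :
    IsSim Λ ξ ζ (BhvEquiv ξ ζ) ∧
      IsSim Λ ζ ξ (fun y x => BhvEquiv ξ ζ x y) := by
  have hflip : (fun y x => BhvEquiv ξ ζ x y) = BhvEquiv ζ ξ :=
    funext₂ fun _ _ => propext bhvEquiv_comm.symm
  exact ⟨isSim_bhvEquiv ξ ζ Λ, hflip ▸ isSim_bhvEquiv ζ ξ Λ⟩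
end

section
/- A relation S ⊆ X × Y between T-coalgebras is a Λ-bisimulation up to difunctionality if and only if its difunctional closure is a Λ-bisimulation. -/
/-!
Unfolding the chains, `x S̄ y` holds iff `x S y₀` for some `y₀` joined to `y` by steps
`y ~ y'` between two `S`-successors of a common point; in particular `S̄` is difunctional and
is the least difunctional relation containing `S`. For a difunctional `D`, the pairs at which
both transfer conditions along `D` hold again form a difunctional relation: composing the
transfers along `D`, `D⁻¹`, `D` gives a transfer along `D ∘ D⁻¹ ∘ D ⊆ D`, and the liftings are
monotone. Applied to `D = S̄`, this relation contains `S` by hypothesis, hence all of `S̄`.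
-/

open CategoryTheory

universe u

/-- The difunctional closure of a relation, via zig-zag chains. -/
def DifClosure {X Y : Type u} (S : X → Y → Prop) (x : X) (y : Y) : Prop :=
  ∃ (n : ℕ) (xs : Fin (n + 1) → X) (ys : Fin (n + 1) → Y),
    xs 0 = x ∧ ys (Fin.last n) = y ∧
    (∀ i, S (xs i) (ys i)) ∧
    (∀ i : Fin n, S (xs i.succ) (ys i.castSucc))

/-- `S` is a `Λ`-bisimulation up to difunctionality. -/
def IsBisimUpToDif {T : Type u ⥤ Type u} (Λ : Set (PredLifting T))
    {X Y : Type u} (ξ : X → T.obj X) (ζ : Y → T.obj Y)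
    (S : X → Y → Prop) : Prop :=
  (∀ x y, S x y → ∀ L ∈ Λ, ∀ A : Set X,
      ξ x ∈ L.app X A → ζ y ∈ L.app Y (RelImage (DifClosure S) A)) ∧
  (∀ x y, S x y → ∀ B : Set Y,
      ∀ L ∈ Λ, ζ y ∈ L.app Y B →
        ξ x ∈ L.app X (RelImage (fun y' x' => DifClosure S x' y') B))

open Relation

section DifClosure

variable {X Y : Type u}

def Difunctional (R : X → Y → Prop) : Prop :=
  ∀ ⦃x y z w⦄, R x y → R z y → R z w → R x w

theorem Difunctional.flip {R : X → Y → Prop} (hR : Difunctional R) : Difunctional (flip R) :=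
  fun _ _ _ _ h₁ h₂ h₃ => hR h₃ h₂ h₁

theorem Difunctional.of_comp_flip_comp {R : X → Y → Prop} (hR : Difunctional R) {x : X} {y : Y}
    (h : Comp (Comp R (_root_.flip R)) R x y) : R x y :=
  let ⟨_, ⟨_, h₁, h₂⟩, h₃⟩ := h
  hR h₁ h₂ h₃

variable {S : X → Y → Prop}

theorem difClosure_of_rel {x : X} {y : Y} (h : S x y) : DifClosure S x y :=
  ⟨0, fun _ => x, fun _ => y, rfl, rfl, fun _ => h, fun i => i.elim0⟩

theorem DifClosure.cons {x x₁ : X} {y₀ y : Y} (h : S x y₀) (h₁ : S x₁ y₀)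
    (hc : DifClosure S x₁ y) : DifClosure S x y := by
  obtain ⟨n, xs, ys, rfl, rfl, hS, hzig⟩ := hc
  refine ⟨n + 1, Fin.cons x xs, Fin.cons y₀ ys, rfl, rfl, Fin.cases h hS, Fin.cases h₁ ?_⟩
  intro i
  simpa [← Fin.succ_castSucc] using hzig i

theorem difClosure_iff_exists_reflTransGen {x : X} {y : Y} :
    DifClosure S x y ↔ ∃ y₀, S x y₀ ∧ ReflTransGen (Comp (flip S) S) y₀ y := by
  constructor
  · rintro ⟨n, xs, ys, rfl, rfl, hS, hzig⟩
    refine ⟨ys 0, hS 0, ?_⟩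
    refine Fin.induction ReflTransGen.refl (fun i ih => ?_) (Fin.last n)
    exact ih.tail ⟨xs i.succ, hzig i, hS i.succ⟩
  · rintro ⟨y₀, hxy₀, hpath⟩
    induction hpath using ReflTransGen.head_induction_on generalizing x with
    | refl => exact difClosure_of_rel hxy₀
    | head hstep _ ih =>
      obtain ⟨x₁, hx₁y₀, hx₁y₁⟩ := hstep
      exact DifClosure.cons hxy₀ hx₁y₀ (ih hx₁y₁)

theorem difunctional_difClosure : Difunctional (DifClosure S) := by
  intro x y z w hxy hzy hzw
  obtain ⟨y₀, hxy₀, hy₀y⟩ := difClosure_iff_exists_reflTransGen.1 hxy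
  obtain ⟨z₀, hzz₀, hz₀y⟩ := difClosure_iff_exists_reflTransGen.1 hzy
  obtain ⟨z₁, hzz₁, hz₁w⟩ := difClosure_iff_exists_reflTransGen.1 hzw
  have : Std.Symm (Comp (flip S) S) := ⟨fun _ _ ⟨x, h, h'⟩ => ⟨x, h', h⟩⟩
  have hy₀z₀ := hy₀y.trans (symm_of (ReflTransGen _) hz₀y)
  exact difClosure_iff_exists_reflTransGen.2
    ⟨y₀, hxy₀, (hy₀z₀.tail ⟨z, hzz₀, hzz₁⟩).trans hz₁w⟩

theorem Difunctional.difClosure_le {E : X → Y → Prop} (hE : Difunctional E)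
    (hSE : ∀ x y, S x y → E x y) {x : X} {y : Y} (h : DifClosure S x y) : E x y := by
  obtain ⟨y₀, hxy₀, hpath⟩ := difClosure_iff_exists_reflTransGen.1 h
  clear h
  induction hpath with
  | refl => exact hSE x y₀ hxy₀
  | tail _ hstep ih =>
    obtain ⟨x', hx'b, hx'c⟩ := hstep
    exact hE ih (hSE _ _ hx'b) (hSE _ _ hx'c)

end DifClosure

theorem relImage_comp_s16 {X Y Z : Type u} (R : X → Y → Prop) (R' : Y → Z → Prop) (A : Set X) :
    RelImage (Comp R R') A = RelImage R' (RelImage R A) := by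
  ext z
  exact ⟨fun ⟨x, hx, y, hxy, hyz⟩ => ⟨y, ⟨x, hx, hxy⟩, hyz⟩,
    fun ⟨y, ⟨x, hx, hxy⟩, hyz⟩ => ⟨x, hx, y, hxy, hyz⟩⟩

section Transfer

variable {T : Type u ⥤ Type u} (Λ : Set (PredLifting T)) {X Y Z : Type u}
  (ξ : X → T.obj X) (ζ : Y → T.obj Y) (η : Z → T.obj Z)

def SimAt (R : X → Y → Prop) (x : X) (y : Y) : Prop :=
  ∀ L ∈ Λ, ∀ A : Set X, ξ x ∈ L.app X A → ζ y ∈ L.app Y (RelImage R A)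

def BisimAt (R : X → Y → Prop) (x : X) (y : Y) : Prop :=
  SimAt Λ ξ ζ R x y ∧ SimAt Λ ζ ξ (flip R) y x

variable {Λ ξ ζ η}

theorem SimAt.comp {R : X → Y → Prop} {R' : Y → Z → Prop} {x : X} {y : Y} {z : Z}
    (h : SimAt Λ ξ ζ R x y) (h' : SimAt Λ ζ η R' y z) : SimAt Λ ξ η (Comp R R') x z := by
  intro L hL A hA
  rw [relImage_comp_s16]
  exact h' L hL _ (h L hL A hA)

theorem SimAt.mono {R R' : X → Y → Prop} {x : X} {y : Y} (h : SimAt Λ ξ ζ R x y)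
    (hRR' : ∀ a b, R a b → R' a b) : SimAt Λ ξ ζ R' x y := by
  intro L hL A hA
  refine L.mono Y ?_ (h L hL A hA)
  rintro _ ⟨a, ha, hab⟩
  exact ⟨a, ha, hRR' _ _ hab⟩

theorem Difunctional.bisimAt {D : X → Y → Prop} (hD : Difunctional D) :
    Difunctional (BisimAt Λ ξ ζ D) := by
  intro x y x' y' h h₁ h₂
  exact ⟨((h.1.comp h₁.2).comp h₂.1).mono fun _ _ => hD.of_comp_flip_comp,
    ((h₂.2.comp h₁.1).comp h.2).mono fun _ _ => hD.flip.of_comp_flip_comp⟩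

theorem isBisimUpToDif_iff_forall_bisimAt {S : X → Y → Prop} :
    IsBisimUpToDif Λ ξ ζ S ↔ ∀ x y, S x y → BisimAt Λ ξ ζ (DifClosure S) x y :=
  ⟨fun h x y hxy => ⟨h.1 x y hxy, fun L hL B hB => h.2 x y hxy B L hL hB⟩,
    fun h => ⟨fun x y hxy => (h x y hxy).1, fun x y hxy B L hL hB => (h x y hxy).2 L hL B hB⟩⟩

theorem isSim_and_isSim_flip_iff_forall_bisimAt {R : X → Y → Prop} :
    IsSim Λ ξ ζ R ∧ IsSim Λ ζ ξ (fun y x => R x y) ↔ ∀ x y, R x y → BisimAt Λ ξ ζ R x y :=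
  ⟨fun h x y hxy => ⟨h.1 x y hxy, h.2 y x hxy⟩,
    fun h => ⟨fun x y hxy => (h x y hxy).1, fun y x hxy => (h x y hxy).2⟩⟩

end Transfer

theorem bisim_up_to_dif_iff_closure_bisim {T : Type u ⥤ Type u}
    (Λ : Set (PredLifting T)) {X Y : Type u}
    (ξ : X → T.obj X) (ζ : Y → T.obj Y) (S : X → Y → Prop) :
    IsBisimUpToDif Λ ξ ζ S ↔
      (IsSim Λ ξ ζ (DifClosure S) ∧
        IsSim Λ ζ ξ (fun y x => DifClosure S x y)) := by
  rw [isBisimUpToDif_iff_forall_bisimAt, isSim_and_isSim_flip_iff_forall_bisimAt]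
  exact ⟨fun h _ _ => difunctional_difClosure.bisimAt.difClosure_le h,
    fun h x y hxy => h x y (difClosure_of_rel hxy)⟩
end
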